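/- arXiv:2601.16912 — 4 statements merged into one kernel-verified Lean document; each statement's English description precedes it below -/
import Mathlib

section
/- Let f ∈ L^∞(ℝ). Then for every s ∈ ℝ and every real h with 0 < |h| < 1/e, one has |Ψ_f(s+h) − Ψ_f(s)| ≤ 6 ‖f‖_∞ |h| |log|h||. -/
open MeasureTheory Set

lemma norm_exp_mul_I_sub_one_le (θ : ℝ) : ‖Complex.exp (θ * Complex.I) - 1‖ ≤ |θ| := by
  have h1 : ‖Complex.exp (θ * Complex.I) - 1‖ ^ 2 = 2 - 2 * Real.cos θ := by
    rw [Complex.exp_mul_I]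
    simp only [Complex.sq_norm, Complex.normSq_apply]
    simp [Complex.add_re, Complex.add_im, Complex.mul_re, Complex.mul_im, Complex.cos_ofReal_re,
      Complex.sin_ofReal_re]
    nlinarith [Real.sin_sq_add_cos_sq θ]
  have h2 : ‖Complex.exp (θ * Complex.I) - 1‖ ^ 2 ≤ θ ^ 2 := by
    rw [h1]; nlinarith [Real.one_sub_sq_div_two_le_cos (x := θ)]
  calc ‖Complex.exp (θ * Complex.I) - 1‖ = Real.sqrt (‖Complex.exp (θ * Complex.I) - 1‖ ^ 2) :=
        (Real.sqrt_sq (norm_nonneg _)).symm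
    _ ≤ Real.sqrt (θ ^ 2) := Real.sqrt_le_sqrt h2
    _ = |θ| := Real.sqrt_sq_eq_abs θ

lemma integrable_comp_abs' {g : ℝ → ℝ} (hg : IntegrableOn g (Ioi 0)) :
    Integrable (fun x => g |x|) := by
  have int_Ioi : IntegrableOn (fun x => g |x|) (Ioi 0) := by
    refine hg.congr_fun (fun x hx => ?_) measurableSet_Ioi
    rw [abs_of_pos hx]
  have int_Iic : IntegrableOn (fun x ↦ g |x|) (Iic 0) := by
    have m : MeasurableEmbedding fun x : ℝ => -x := (Homeomorph.neg ℝ).measurableEmbedding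
    have hmap : Measure.map (fun x : ℝ => -x) (volume : Measure ℝ) = volume :=
      Measure.map_neg_eq_self _
    have h2 := m.integrableOn_map_iff (f := fun x => g |x|) (s := Iic (0:ℝ))
      (μ := (volume : Measure ℝ))
    rw [hmap] at h2
    rw [h2]
    simp_rw [Function.comp_def, abs_neg]
    have hpre : (fun x : ℝ => -x) ⁻¹' (Iic 0) = Ici 0 := by ext x; simp
    rw [hpre]
    exact (integrableOn_Ici_iff_integrableOn_Ioi).mpr int_Ioi
  rw [← integrableOn_univ, ← Iic_union_Ioi (a := (0:ℝ))]
  exact int_Iic.union int_Ioi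

/-- `Ψ_f(s) = ∫_{|t|>1} e^{-ist} f(t) t⁻² dt`. -/
noncomputable def Psi (f : ℝ → ℂ) (s : ℝ) : ℂ :=
  ∫ t in {t : ℝ | 1 < |t|}, Complex.exp (-(Complex.I * s * t)) * f t / (t : ℂ) ^ 2

set_option maxHeartbeats 1600000 in
/-- For `f ∈ L^∞(ℝ)`, every `s ∈ ℝ` and every real `h` with
`0 < |h| < 1/e`, one has `|Ψ_f(s+h) − Ψ_f(s)| ≤ 6 ‖f‖_∞ |h| |log|h||`. -/
theorem Psi_increment_bound
    (f : ℝ → ℂ) (hf : MemLp f ⊤ (volume : Measure ℝ))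
    (s h : ℝ) (h0 : 0 < |h|) (h1 : |h| < 1 / Real.exp 1) :
    ‖Psi f (s + h) - Psi f s‖ ≤
      6 * (eLpNorm f ⊤ (volume : Measure ℝ)).toReal * |h| * abs (Real.log |h|) := by
  set C := (eLpNorm f ⊤ (volume : Measure ℝ)).toReal with hCdef
  have hCnn : 0 ≤ C := ENNReal.toReal_nonneg
  set T : ℝ := |h|⁻¹ with hTdef
  have hh1 : |h| < 1 := lt_trans h1 (by
    rw [div_lt_one (Real.exp_pos 1)]
    linarith [Real.add_one_le_exp (1:ℝ)])
  have hT1 : 1 < T := one_lt_inv_iff₀.mpr ⟨h0, hh1⟩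
  have hT0 : 0 < T := lt_trans one_pos hT1
  set L : ℝ := abs (Real.log |h|) with hLdef
  have hlog : Real.log |h| < -1 := by
    have := Real.log_lt_log h0 h1
    rwa [one_div, Real.log_inv, Real.log_exp] at this
  have hL1 : 1 ≤ L := by
    rw [hLdef, abs_of_neg (show Real.log |h| < 0 by linarith)]; linarith
  have hlogT : Real.log T = L := by
    rw [hTdef, Real.log_inv, hLdef, abs_of_neg (show Real.log |h| < 0 by linarith)]
  set S : Set ℝ := {t : ℝ | 1 < |t|} with hSdef
  have hSmeas : MeasurableSet S := measurableSet_lt measurable_const measurable_id.abs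
  -- the bounding functions
  set ψ : ℝ → ℝ := fun u => C * min 2 (|h| * u) / u ^ 2 with hψdef
  have hψm : Measurable ψ := by
    apply Measurable.div
    · exact (measurable_const.min (measurable_const.mul measurable_id)).const_mul C
    · exact measurable_id.pow_const 2
  set φ : ℝ → ℝ := fun u => (Ioi (1:ℝ)).indicator ψ u with hφdef
  have hψnn : ∀ u : ℝ, 0 < u → 0 ≤ ψ u := by
    intro u hu
    have : (0:ℝ) ≤ min 2 (|h| * u) := le_min (by norm_num) (by positivity)
    positivity
  -- integrability of ψ on the pieces
  have hψIoc : IntegrableOn ψ (Ioc 1 T) := by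
    have hc : ContinuousOn ψ (Icc 1 T) := by
      apply ContinuousOn.div
      · fun_prop
      · fun_prop
      · intro x hx
        exact ne_of_gt (pow_pos (lt_of_lt_of_le one_pos hx.1) 2)
    exact hc.integrableOn_Icc.mono_set Ioc_subset_Icc_self
  have hrpow : IntegrableOn (fun u : ℝ => u ^ (-2:ℝ)) (Ioi T) :=
    integrableOn_Ioi_rpow_of_lt (by norm_num) hT0
  have hψIoi : IntegrableOn ψ (Ioi T) := by
    refine Integrable.mono' (hrpow.const_mul (2*C)) hψm.aestronglyMeasurable.restrict ?_
    filter_upwards [ae_restrict_mem measurableSet_Ioi] with u hu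
    have hu0 : 0 < u := lt_trans hT0 hu
    have h2 : u ^ (-2:ℝ) = (u^2)⁻¹ := by
      rw [Real.rpow_neg hu0.le, ← Real.rpow_natCast u 2]; norm_num
    rw [Real.norm_eq_abs, abs_of_nonneg (hψnn u hu0), hψdef]
    simp only []
    rw [h2, div_eq_mul_inv]
    have : C * min 2 (|h| * u) ≤ 2 * C := by
      calc C * min 2 (|h| * u) ≤ C * 2 := mul_le_mul_of_nonneg_left (min_le_left _ _) hCnn
        _ = 2 * C := mul_comm _ _
    exact mul_le_mul_of_nonneg_right this (by positivity)
  have hψIoi1 : IntegrableOn ψ (Ioi 1) := by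
    rw [← Ioc_union_Ioi_eq_Ioi hT1.le, integrableOn_union]
    exact ⟨hψIoc, hψIoi⟩
  have hφInt : Integrable φ := (integrable_indicator_iff measurableSet_Ioi).mpr hψIoi1
  have hφabs : Integrable (fun t => φ |t|) := integrable_comp_abs' hφInt.integrableOn
  -- the dominator for each Fourier-type integrand
  set ρ : ℝ → ℝ := fun u => (Ioi (1:ℝ)).indicator (fun u => C * u ^ (-2:ℝ)) u with hρdef
  have hρ1 : IntegrableOn (fun u : ℝ => C * u ^ (-2:ℝ)) (Ioi 1) :=
    (integrableOn_Ioi_rpow_of_lt (by norm_num) one_pos).const_mul C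
  have hρInt : Integrable ρ := (integrable_indicator_iff measurableSet_Ioi).mpr hρ1
  have hρabs : Integrable (fun t => ρ |t|) := integrable_comp_abs' hρInt.integrableOn
  -- a.e. bound on f
  have hftop : eLpNorm f ⊤ (volume : Measure ℝ) ≠ ⊤ := hf.2.ne
  have hae : ∀ᵐ t ∂(volume : Measure ℝ), ‖f t‖ ≤ C := by
    filter_upwards [enorm_ae_le_eLpNormEssSup f (volume : Measure ℝ)] with t ht
    have h2 : (‖f t‖₊ : ENNReal) ≤ eLpNorm f ⊤ (volume : Measure ℝ) := by
      rwa [eLpNorm_exponent_top]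
    have := ENNReal.toReal_mono hftop h2
    simpa [hCdef] using this
  -- integrability of the integrands
  have hFmeas : ∀ u : ℝ, AEStronglyMeasurable
      (fun t : ℝ => Complex.exp (-(Complex.I * (u:ℂ) * (t:ℂ))) * f t / (t:ℂ)^2)
      (volume : Measure ℝ) := by
    intro u
    simp_rw [div_eq_mul_inv]
    have hc : Continuous fun t : ℝ => Complex.exp (-(Complex.I * (u:ℂ) * (t:ℂ))) := by fun_prop
    have h2 : Measurable fun t : ℝ => (((t:ℂ))^2)⁻¹ :=
      (Complex.measurable_ofReal.pow_const 2).inv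
    exact (hc.aestronglyMeasurable.mul hf.1).mul h2.aestronglyMeasurable
  have hpow : ∀ t : ℝ, ‖((t:ℂ))^2‖ = |t|^2 := by
    intro t
    rw [norm_pow, Complex.norm_real, Real.norm_eq_abs]
  have hnormF : ∀ u : ℝ, ∀ t : ℝ, t ∈ S → ‖f t‖ ≤ C →
      ‖Complex.exp (-(Complex.I * (u:ℂ) * (t:ℂ))) * f t / (t:ℂ)^2‖ ≤ ρ |t| := by
    intro u t htS htC
    have ht1 : (1:ℝ) < |t| := htS
    have ht0 : (0:ℝ) < |t| := lt_trans one_pos ht1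
    have hr : ρ |t| = C * |t| ^ (-2:ℝ) := indicator_of_mem ht1 _
    have he : ‖Complex.exp (-(Complex.I * (u:ℂ) * (t:ℂ)))‖ = 1 := by
      rw [Complex.norm_exp]
      norm_num [Complex.mul_re, Complex.mul_im]
    have hinv : |t| ^ (-2:ℝ) = (|t|^2)⁻¹ := by
      rw [Real.rpow_neg ht0.le, ← Real.rpow_natCast |t| 2]; norm_num
    rw [hr, norm_div, norm_mul, he, one_mul, hpow, hinv, ← div_eq_mul_inv]
    gcongr
  have hFint : ∀ u : ℝ, IntegrableOn
      (fun t : ℝ => Complex.exp (-(Complex.I * (u:ℂ) * (t:ℂ))) * f t / (t:ℂ)^2) S := by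
    intro u
    refine Integrable.mono' hρabs.integrableOn ((hFmeas u).restrict) ?_
    filter_upwards [ae_restrict_mem hSmeas, ae_restrict_of_ae hae] with t htS htC
    exact hnormF u t htS htC
  -- pointwise bound on the increment
  have hpt : ∀ t : ℝ, t ∈ S → ‖f t‖ ≤ C →
      ‖Complex.exp (-(Complex.I * ((s+h:ℝ):ℂ) * (t:ℂ))) * f t / (t:ℂ)^2
        - Complex.exp (-(Complex.I * (s:ℂ) * (t:ℂ))) * f t / (t:ℂ)^2‖ ≤ φ |t| := by
    intro t htS htC
    have ht1 : (1:ℝ) < |t| := htS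
    have ht0 : (0:ℝ) < |t| := lt_trans one_pos ht1
    have hsplit : Complex.exp (-(Complex.I * ((s+h:ℝ):ℂ) * (t:ℂ)))
        = Complex.exp (-(Complex.I * (s:ℂ) * (t:ℂ))) * Complex.exp (-(Complex.I * (h:ℂ) * (t:ℂ))) := by
      rw [← Complex.exp_add]; congr 1; push_cast; ring
    have hdiff : Complex.exp (-(Complex.I * ((s+h:ℝ):ℂ) * (t:ℂ))) * f t / (t:ℂ)^2
        - Complex.exp (-(Complex.I * (s:ℂ) * (t:ℂ))) * f t / (t:ℂ)^2
        = Complex.exp (-(Complex.I * (s:ℂ) * (t:ℂ)))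
            * (Complex.exp (-(Complex.I * (h:ℂ) * (t:ℂ))) - 1) * f t / (t:ℂ)^2 := by
      rw [hsplit]; ring
    have he : ‖Complex.exp (-(Complex.I * (s:ℂ) * (t:ℂ)))‖ = 1 := by
      rw [Complex.norm_exp]
      norm_num [Complex.mul_re, Complex.mul_im]
    have heh : ‖Complex.exp (-(Complex.I * (h:ℂ) * (t:ℂ)))‖ = 1 := by
      rw [Complex.norm_exp]
      norm_num [Complex.mul_re, Complex.mul_im]
    have hb2 : ‖Complex.exp (-(Complex.I * (h:ℂ) * (t:ℂ))) - 1‖ ≤ 2 := by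
      calc ‖Complex.exp (-(Complex.I * (h:ℂ) * (t:ℂ))) - 1‖
          ≤ ‖Complex.exp (-(Complex.I * (h:ℂ) * (t:ℂ)))‖ + ‖(1:ℂ)‖ := norm_sub_le _ _
        _ = 2 := by rw [heh, norm_one]; norm_num
    have hbθ : ‖Complex.exp (-(Complex.I * (h:ℂ) * (t:ℂ))) - 1‖ ≤ |h| * |t| := by
      have harg : -(Complex.I * (h:ℂ) * (t:ℂ)) = ((-(h*t) : ℝ) : ℂ) * Complex.I := by
        push_cast; ring
      rw [harg]
      calc ‖Complex.exp (((-(h*t) : ℝ) : ℂ) * Complex.I) - 1‖ ≤ |(-(h*t))| :=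
            norm_exp_mul_I_sub_one_le _
        _ = |h| * |t| := by rw [abs_neg, abs_mul]
    have hmin : ‖Complex.exp (-(Complex.I * (h:ℂ) * (t:ℂ))) - 1‖ ≤ min 2 (|h| * |t|) :=
      le_min hb2 hbθ
    have hφt : φ |t| = C * min 2 (|h| * |t|) / |t|^2 := indicator_of_mem ht1 _
    rw [hdiff, norm_div, norm_mul, norm_mul, he, one_mul, hpow, hφt]
    have hnum : ‖Complex.exp (-(Complex.I * (h:ℂ) * (t:ℂ))) - 1‖ * ‖f t‖
        ≤ C * min 2 (|h| * |t|) := by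
      calc ‖Complex.exp (-(Complex.I * (h:ℂ) * (t:ℂ))) - 1‖ * ‖f t‖
          ≤ min 2 (|h| * |t|) * C :=
            mul_le_mul hmin htC (norm_nonneg _) (le_min (by norm_num) (by positivity))
        _ = C * min 2 (|h| * |t|) := mul_comm _ _
    exact (div_le_div_iff_of_pos_right (by positivity)).mpr hnum
  -- rewrite the difference as a single integral
  have hdiffint : Psi f (s+h) - Psi f s
      = ∫ t in S, (Complex.exp (-(Complex.I * ((s+h:ℝ):ℂ) * (t:ℂ))) * f t / (t:ℂ)^2
          - Complex.exp (-(Complex.I * (s:ℂ) * (t:ℂ))) * f t / (t:ℂ)^2) := by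
    rw [integral_sub (hFint (s+h)) (hFint s)]
    rfl
  -- the two integral bounds
  have b1 : ∫ u in Ioc 1 T, ψ u ≤ C * |h| * L := by
    have hmono : ∀ u ∈ Ioc 1 T, ψ u ≤ C * |h| * u⁻¹ := by
      intro u hu
      have hu0 : 0 < u := lt_trans one_pos hu.1
      have hle : ψ u ≤ C * (|h| * u) / u^2 :=
        (div_le_div_iff_of_pos_right (by positivity)).mpr
          (mul_le_mul_of_nonneg_left (min_le_right _ _) hCnn)
      calc ψ u ≤ C * (|h| * u) / u^2 := hle
        _ = C * |h| * u⁻¹ := by field_simp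
    have hint : IntegrableOn (fun u : ℝ => C * |h| * u⁻¹) (Ioc 1 T) := by
      have hc : ContinuousOn (fun u : ℝ => C * |h| * u⁻¹) (Icc 1 T) := by
        apply ContinuousOn.mul continuousOn_const
        exact continuousOn_inv₀.mono fun x hx =>
          ne_of_gt (lt_of_lt_of_le one_pos hx.1)
      exact hc.integrableOn_Icc.mono_set Ioc_subset_Icc_self
    calc ∫ u in Ioc 1 T, ψ u ≤ ∫ u in Ioc 1 T, C * |h| * u⁻¹ :=
          setIntegral_mono_on hψIoc hint measurableSet_Ioc hmono
      _ = C * |h| * Real.log T := by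
          rw [← intervalIntegral.integral_of_le hT1.le,
            intervalIntegral.integral_const_mul, integral_inv_of_pos one_pos hT0, div_one]
      _ = C * |h| * L := by rw [hlogT]
  have b2 : ∫ u in Ioi T, ψ u ≤ 2 * (C * |h|) := by
    have hmono : ∀ u ∈ Ioi T, ψ u ≤ 2 * C * u ^ (-2:ℝ) := by
      intro u hu
      have hu0 : 0 < u := lt_trans hT0 hu
      have h2 : u ^ (-2:ℝ) = (u^2)⁻¹ := by
        rw [Real.rpow_neg hu0.le, ← Real.rpow_natCast u 2]; norm_num
      rw [h2]
      have : C * min 2 (|h| * u) ≤ 2 * C := by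
        calc C * min 2 (|h| * u) ≤ C * 2 := mul_le_mul_of_nonneg_left (min_le_left _ _) hCnn
          _ = 2 * C := mul_comm _ _
      calc ψ u = C * min 2 (|h| * u) * (u^2)⁻¹ := by rw [hψdef]; ring
        _ ≤ 2 * C * (u^2)⁻¹ := mul_le_mul_of_nonneg_right this (by positivity)
    have hint : IntegrableOn (fun u : ℝ => 2 * C * u ^ (-2:ℝ)) (Ioi T) :=
      hrpow.const_mul _
    calc ∫ u in Ioi T, ψ u ≤ ∫ u in Ioi T, 2 * C * u ^ (-2:ℝ) :=
          setIntegral_mono_on hψIoi hint measurableSet_Ioi hmono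
      _ = 2 * C * (T ^ (-1:ℝ)) := by
          rw [integral_const_mul, integral_Ioi_rpow_of_lt (by norm_num) hT0]
          norm_num
      _ = 2 * (C * |h|) := by
          rw [Real.rpow_neg_one, hTdef, inv_inv]; ring
  -- put everything together
  have hcomp : (fun t : ℝ => φ |t|) = S.indicator (fun t => φ |t|) := by
    funext t
    by_cases ht : t ∈ S
    · rw [indicator_of_mem ht]
    · rw [indicator_of_notMem ht]
      have ht' : ¬ (1 < |t|) := ht
      exact indicator_of_notMem (by simpa using ht') ψ
  calc ‖Psi f (s+h) - Psi f s‖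
      = ‖∫ t in S, (Complex.exp (-(Complex.I * ((s+h:ℝ):ℂ) * (t:ℂ))) * f t / (t:ℂ)^2
          - Complex.exp (-(Complex.I * (s:ℂ) * (t:ℂ))) * f t / (t:ℂ)^2)‖ := by rw [hdiffint]
    _ ≤ ∫ t in S, φ |t| := by
        refine norm_integral_le_of_norm_le hφabs.integrableOn ?_
        filter_upwards [ae_restrict_mem hSmeas, ae_restrict_of_ae hae] with t htS htC
        exact hpt t htS htC
    _ = ∫ t, φ |t| := by
        conv_rhs => rw [hcomp]
        rw [integral_indicator hSmeas]
    _ = 2 * ∫ u in Ioi 0, φ u := integral_comp_abs (f := φ)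
    _ = 2 * ∫ u in Ioi 1, ψ u := by
        rw [hφdef]
        rw [setIntegral_indicator measurableSet_Ioi, Ioi_inter_Ioi]
        norm_num
    _ = 2 * ((∫ u in Ioc 1 T, ψ u) + ∫ u in Ioi T, ψ u) := by
        rw [← setIntegral_union (Ioc_disjoint_Ioi le_rfl) measurableSet_Ioi hψIoc hψIoi,
          Ioc_union_Ioi_eq_Ioi hT1.le]
    _ ≤ 2 * ((C * |h| * L) + 2 * (C * |h|)) := by
        have := b1; have := b2; linarith
    _ ≤ 6 * C * |h| * L := by
        nlinarith [mul_nonneg hCnn (abs_nonneg h), hL1]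
end

section
/- Fix s ∈ ℝ. Let ψ : ℝ \ {0} → (0, ∞) be a function such that ψ(h)/(h log|h|) → 0 as h → 0. Then there exists f ∈ L^∞(ℝ) such that the quotient (Ψ_f(s+h) − Ψ_f(s))/ψ(h) is unbounded as h → 0, i.e. for every M > 0 and every δ > 0 there exists h with 0 < |h| < δ and |Ψ_f(s+h) − Ψ_f(s)|/ψ(h) > M. In particular, Ψ_f need not be Lipschitz continuous. -/
open MeasureTheory Set

namespace PsiAux

noncomputable def sg (t : ℝ) : ℂ := if t < 0 then -1 else 1

lemma sg_meas : Measurable sg :=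
  Measurable.ite measurableSet_Iio measurable_const measurable_const

lemma sg_norm (t : ℝ) : ‖sg t‖ = 1 := by unfold sg; split <;> simp

lemma sg_pos {t : ℝ} (ht : 0 < t) : sg t = 1 := by simp [sg, not_lt.mpr ht.le]

lemma sg_neg {t : ℝ} (ht : t < 0) : sg t = -1 := by simp [sg, ht]

noncomputable def ff (s : ℝ) (t : ℝ) : ℂ := Complex.exp (Complex.I * s * t) * sg t

lemma norm_exp_I (a t : ℝ) : ‖Complex.exp (-(Complex.I * a * t))‖ = 1 := by
  rw [Complex.norm_exp]
  simp [Complex.mul_re, Complex.mul_im]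

lemma ff_meas (s : ℝ) : Measurable (ff s) := by
  apply Measurable.mul ?_ sg_meas
  exact Complex.measurable_exp.comp
    ((Complex.measurable_ofReal.const_mul (Complex.I * s)))

lemma ff_norm (s t : ℝ) : ‖ff s t‖ = 1 := by
  rw [ff, norm_mul, sg_norm, mul_one, Complex.norm_exp]
  simp [Complex.mul_re, Complex.mul_im]

lemma int_inv_sq_Ioi {c : ℝ} (hc : 0 < c) :
    IntegrableOn (fun t : ℝ => (t ^ 2)⁻¹) (Ioi c) := by
  have H := integrableOn_Ioi_rpow_of_lt (by norm_num : (-2 : ℝ) < -1) hc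
  refine H.congr_fun (fun x hx => ?_) measurableSet_Ioi
  have hx0 : 0 < x := hc.trans hx
  beta_reduce
  rw [Real.rpow_neg hx0.le, Real.rpow_two]

lemma map_neg_restrict {c : ℝ} :
    ((volume : Measure ℝ).restrict (Ioi c)).map Neg.neg
      = (volume : Measure ℝ).restrict (Iio (-c)) := by
  conv => rhs; rw [← Measure.map_neg_eq_self (volume : Measure ℝ),
    measurableEmbedding_neg.restrict_map]
  congr 1
  ext x
  simp [neg_lt]

lemma integrableOn_Iio_of_neg {E : Type*} [NormedAddCommGroup E] {f : ℝ → E} {c : ℝ}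
    (hf : IntegrableOn (fun x => f (-x)) (Ioi c)) : IntegrableOn f (Iio (-c)) := by
  rw [IntegrableOn, ← map_neg_restrict, measurableEmbedding_neg.integrable_map_iff]
  exact hf

lemma integrableOn_neg_of_Iio {E : Type*} [NormedAddCommGroup E] {f : ℝ → E} {c : ℝ}
    (hf : IntegrableOn f (Iio (-c))) : IntegrableOn (fun x => f (-x)) (Ioi c) := by
  rw [IntegrableOn, ← map_neg_restrict] at hf
  exact measurableEmbedding_neg.integrable_map_iff.mp hf

lemma int_inv_sq_Iio : IntegrableOn (fun t : ℝ => (t ^ 2)⁻¹) (Iio (-1 : ℝ)) := by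
  apply integrableOn_Iio_of_neg (c := 1)
  simpa [neg_sq] using int_inv_sq_Ioi (one_pos)

lemma int_inv_sq_Ioi_val {c : ℝ} (hc : 0 < c) :
    ∫ t in Ioi c, (t ^ 2)⁻¹ = c⁻¹ := by
  have H := integral_Ioi_rpow_of_lt (by norm_num : (-2 : ℝ) < -1) hc
  have He : ∫ t in Ioi c, t ^ (-2 : ℝ) = ∫ t in Ioi c, (t ^ 2)⁻¹ := by
    refine setIntegral_congr_fun measurableSet_Ioi (fun x hx => ?_)
    have hx0 : 0 < x := hc.trans hx
    rw [Real.rpow_neg hx0.le, Real.rpow_two]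
  rw [← He, H]
  norm_num
  rw [Real.rpow_neg_one]

lemma int_sin_Ioi (h : ℝ) {c : ℝ} (hc : 0 < c) :
    IntegrableOn (fun t : ℝ => Real.sin (h * t) / t ^ 2) (Ioi c) := by
  apply (int_inv_sq_Ioi hc).mono'
  · exact ((Real.measurable_sin.comp (measurable_const_mul h)).div
      ((measurable_id.pow_const 2))).aestronglyMeasurable
  · filter_upwards [ae_restrict_mem measurableSet_Ioi] with t ht
    have ht0 : 0 < t := hc.trans ht
    rw [Real.norm_eq_abs, abs_div, abs_of_pos (by positivity : (0:ℝ) < t ^ 2),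
      div_eq_mul_inv]
    nth_rewrite 2 [← one_mul ((t^2)⁻¹)]
    exact mul_le_mul_of_nonneg_right (Real.abs_sin_le_one _) (by positivity)


noncomputable def DD (h : ℝ) (t : ℝ) : ℂ :=
  (Complex.exp (-(Complex.I * h * t)) - 1) * sg t / (t : ℂ) ^ 2

lemma DD_meas (h : ℝ) : Measurable (DD h) := by
  apply Measurable.div
  · apply Measurable.mul ?_ sg_meas
    exact (Complex.measurable_exp.comp
      ((Complex.measurable_ofReal.const_mul (Complex.I * h)).neg)).sub measurable_const
  · exact Complex.measurable_ofReal.pow_const 2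

lemma norm_sq_coe (t : ℝ) : ‖((t : ℂ)) ^ 2‖ = t ^ 2 := by
  rw [norm_pow, Complex.norm_real, Real.norm_eq_abs, sq_abs]

lemma DD_norm_le (h t : ℝ) : ‖DD h t‖ ≤ 2 * (t ^ 2)⁻¹ := by
  rw [DD, norm_div, norm_mul, sg_norm, mul_one, norm_sq_coe, div_eq_mul_inv]
  have h1 : ‖Complex.exp (-(Complex.I * h * t)) - 1‖ ≤ 2 := by
    calc ‖Complex.exp (-(Complex.I * h * t)) - 1‖
        ≤ ‖Complex.exp (-(Complex.I * h * t))‖ + ‖(1 : ℂ)‖ := norm_sub_le _ _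
      _ = 2 := by rw [norm_exp_I]; norm_num
  exact mul_le_mul_of_nonneg_right h1 (by positivity)

lemma hS_eq : {t : ℝ | 1 < |t|} = Iio (-1 : ℝ) ∪ Ioi 1 := by
  ext t
  simp only [mem_setOf_eq, mem_union, mem_Iio, mem_Ioi, lt_abs]
  constructor
  · rintro (h | h)
    · exact Or.inr h
    · exact Or.inl (by linarith)
  · rintro (h | h)
    · exact Or.inr (by linarith)
    · exact Or.inl h

lemma int_inv_sq_S : IntegrableOn (fun t : ℝ => (t ^ 2)⁻¹) (Iio (-1 : ℝ) ∪ Ioi 1) :=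
  int_inv_sq_Iio.union (int_inv_sq_Ioi one_pos)

lemma hgg (s a : ℝ) :
    IntegrableOn (fun t : ℝ => Complex.exp (-(Complex.I * a * t)) * ff s t / (t : ℂ) ^ 2)
      (Iio (-1 : ℝ) ∪ Ioi 1) := by
  apply int_inv_sq_S.mono'
  · exact (((Complex.measurable_exp.comp
      ((Complex.measurable_ofReal.const_mul (Complex.I * a)).neg)).mul (ff_meas s)).div
      (Complex.measurable_ofReal.pow_const 2)).aestronglyMeasurable
  · refine ae_of_all _ (fun t => ?_)
    rw [norm_div, norm_mul, ff_norm, mul_one, norm_exp_I, norm_sq_coe, one_div]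

lemma hDD_S (h : ℝ) : IntegrableOn (DD h) (Iio (-1 : ℝ) ∪ Ioi 1) := by
  apply (int_inv_sq_S.const_mul 2).mono'
  · exact (DD_meas h).aestronglyMeasurable
  · exact ae_of_all _ (fun t => DD_norm_le h t)

lemma delta_eq (s h : ℝ) :
    Psi (ff s) (s + h) - Psi (ff s) s
      = (-2 * Complex.I) * ((∫ t in Ioi (1 : ℝ), Real.sin (h * t) / t ^ 2 : ℝ) : ℂ) := by
  have hdisj : Disjoint (Iio (-1 : ℝ)) (Ioi 1) :=
    (Iio_disjoint_Ici (by norm_num : (-1 : ℝ) ≤ 1)).mono_right Ioi_subset_Ici_self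
  have key : ∀ t : ℝ,
      Complex.exp (-(Complex.I * (↑(s + h) : ℂ) * t)) * ff s t / (t : ℂ) ^ 2
        - Complex.exp (-(Complex.I * s * t)) * ff s t / (t : ℂ) ^ 2 = DD h t := by
    intro t
    have e1 : Complex.exp (-(Complex.I * (↑(s + h) : ℂ) * t))
        * Complex.exp (Complex.I * s * t) = Complex.exp (-(Complex.I * h * t)) := by
      rw [← Complex.exp_add]; congr 1; push_cast; ring
    have e2 : Complex.exp (-(Complex.I * (s : ℂ) * t))
        * Complex.exp (Complex.I * s * t) = 1 := by
      rw [← Complex.exp_add, neg_add_cancel, Complex.exp_zero]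
    calc Complex.exp (-(Complex.I * (↑(s + h) : ℂ) * t)) * ff s t / (t : ℂ) ^ 2
          - Complex.exp (-(Complex.I * s * t)) * ff s t / (t : ℂ) ^ 2
        = ((Complex.exp (-(Complex.I * (↑(s + h) : ℂ) * t)) * Complex.exp (Complex.I * s * t)) * sg t
            - (Complex.exp (-(Complex.I * (s : ℂ) * t)) * Complex.exp (Complex.I * s * t)) * sg t)
            / (t : ℂ) ^ 2 := by rw [ff]; ring
      _ = DD h t := by rw [e1, e2, DD]; ring
  rw [Psi, Psi, hS_eq, ← integral_sub (hgg s (s + h)) (hgg s s)]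
  rw [integral_congr_ae (ae_of_all _ (fun t => key t))]
  rw [setIntegral_union hdisj measurableSet_Ioi
    ((hDD_S h).mono_set subset_union_left) ((hDD_S h).mono_set subset_union_right)]
  have hneg : ∫ t in Iio (-1 : ℝ), DD h t = ∫ t in Ioi (1 : ℝ), DD h (-t) := by
    rw [← integral_Iic_eq_integral_Iio]
    have := integral_comp_neg_Iic (-1 : ℝ) (fun x => DD h (-x))
    simp only [neg_neg] at this
    exact this
  rw [hneg]
  have hint2 : IntegrableOn (DD h) (Ioi (1 : ℝ)) := (hDD_S h).mono_set subset_union_right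
  have hint1 : IntegrableOn (fun t => DD h (-t)) (Ioi (1 : ℝ)) :=
    integrableOn_neg_of_Iio ((hDD_S h).mono_set subset_union_left)
  rw [← integral_add hint1 hint2]
  have key2 : ∀ t ∈ Ioi (1 : ℝ),
      DD h (-t) + DD h t = (-2 * Complex.I) * ((Real.sin (h * t) / t ^ 2 : ℝ) : ℂ) := by
    intro t ht
    have ht0 : (0 : ℝ) < t := lt_trans one_pos ht
    rw [DD, DD, sg_neg (by linarith : -t < (0 : ℝ)), sg_pos ht0]
    have e3 : -(Complex.I * (h : ℂ) * ((-t : ℝ) : ℂ)) = ((h * t : ℝ) : ℂ) * Complex.I := by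
      push_cast; ring
    have e4 : -(Complex.I * (h : ℂ) * (t : ℂ)) = (-((h * t : ℝ) : ℂ)) * Complex.I := by
      push_cast; ring
    rw [e3, e4, Complex.exp_mul_I, Complex.exp_mul_I, Complex.cos_neg, Complex.sin_neg]
    have e5 : ((Real.sin (h * t) / t ^ 2 : ℝ) : ℂ)
        = Complex.sin ((h * t : ℝ) : ℂ) / (t : ℂ) ^ 2 := by
      push_cast [Complex.ofReal_sin]
      ring
    rw [e5]
    have ht2 : ((-t : ℝ) : ℂ) ^ 2 = (t : ℂ) ^ 2 := by push_cast; ring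
    rw [ht2]
    have htne : ((t : ℂ)) ^ 2 ≠ 0 := by
      simpa using pow_ne_zero 2 (Complex.ofReal_ne_zero.mpr (ne_of_gt ht0))
    field_simp
    ring
  rw [setIntegral_congr_fun measurableSet_Ioi key2]
  rw [integral_const_mul]
  congr 1
  exact integral_ofReal

lemma delta_norm (s h : ℝ) :
    ‖Psi (ff s) (s + h) - Psi (ff s) s‖
      = 2 * |∫ t in Ioi (1 : ℝ), Real.sin (h * t) / t ^ 2| := by
  rw [delta_eq, norm_mul, Complex.norm_real, Real.norm_eq_abs]
  norm_num

end PsiAux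

namespace PsiAux2
open PsiAux

lemma I_lower {h : ℝ} (h0 : 0 < h) (h1 : h ≤ Real.exp (-Real.pi)) :
    2 / Real.pi * (h * Real.log h⁻¹) - h
      ≤ ∫ t in Ioi (1 : ℝ), Real.sin (h * t) / t ^ 2 := by
  have hlt1 : h < 1 := lt_of_le_of_lt h1 (by
    rw [Real.exp_lt_one_iff]
    linarith [Real.pi_pos])
  set c : ℝ := h⁻¹ with hcdef
  have hc0 : 0 < c := by positivity
  have hc1 : 1 < c := by
    rw [hcdef, lt_inv_comm₀ one_pos h0]
    simpa using hlt1
  have hhc : h * c = 1 := mul_inv_cancel₀ (ne_of_gt h0)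
  set F : ℝ → ℝ := fun t => Real.sin (h * t) / t ^ 2 with hFdef
  have hF1 : IntegrableOn F (Ioc 1 c) :=
    (int_sin_Ioi h one_pos).mono_set Ioc_subset_Ioi_self
  have hF2 : IntegrableOn F (Ioi c) :=
    (int_sin_Ioi h one_pos).mono_set (Ioi_subset_Ioi hc1.le)
  have hsplit : ∫ t in Ioi (1 : ℝ), F t
      = (∫ t in Ioc 1 c, F t) + ∫ t in Ioi c, F t := by
    rw [← Ioc_union_Ioi_eq_Ioi hc1.le,
      setIntegral_union Ioc_disjoint_Ioi_same measurableSet_Ioi hF1 hF2]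
  set G : ℝ → ℝ := fun t => (2 / Real.pi * h) * t⁻¹ with hGdef
  have hG : IntegrableOn G (Ioc 1 c) := by
    apply ContinuousOn.integrableOn_Icc (by
      apply ContinuousOn.mul continuousOn_const
      apply ContinuousOn.inv₀ continuousOn_id
      intro x hx
      exact ne_of_gt (lt_of_lt_of_le one_pos hx.1)) |>.mono_set Ioc_subset_Icc_self
  have low1 : (2 / Real.pi * h) * Real.log c ≤ ∫ t in Ioc 1 c, F t := by
    have hmono : (∫ t in Ioc 1 c, G t) ≤ ∫ t in Ioc 1 c, F t := by
      apply setIntegral_mono_on hG hF1 measurableSet_Ioc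
      intro t ht
      have ht0 : 0 < t := lt_trans one_pos ht.1
      have hht1 : h * t ≤ 1 := by
        calc h * t ≤ h * c := by gcongr; exact ht.2
        _ = 1 := hhc
      have hsin : 2 / Real.pi * (h * t) ≤ Real.sin (h * t) :=
        Real.mul_le_sin (by positivity)
          (le_trans hht1 (by linarith [Real.pi_gt_three]))
      calc G t = (2 / Real.pi * (h * t)) / t ^ 2 := by
            rw [hGdef]; field_simp
        _ ≤ Real.sin (h * t) / t ^ 2 := by gcongr
        _ = F t := rfl
    have hval : ∫ t in Ioc 1 c, G t = (2 / Real.pi * h) * Real.log c := by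
      simp only [hGdef]
      rw [← intervalIntegral.integral_of_le hc1.le,
        intervalIntegral.integral_const_mul,
        integral_inv_of_pos one_pos hc0, div_one]
    linarith [hmono, hval.symm.le]
  have low2 : -h ≤ ∫ t in Ioi c, F t := by
    have habs : |∫ t in Ioi c, F t| ≤ h := by
      calc |∫ t in Ioi c, F t| ≤ ∫ t in Ioi c, |F t| := by
            simpa [Real.norm_eq_abs] using
              norm_integral_le_integral_norm (μ := volume.restrict (Ioi c)) F
        _ ≤ ∫ t in Ioi c, (t ^ 2)⁻¹ := by
            apply setIntegral_mono_on hF2.abs (int_inv_sq_Ioi hc0) measurableSet_Ioi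
            intro t ht
            have ht0 : 0 < t := lt_trans hc0 ht
            rw [hFdef, abs_div, abs_of_pos (by positivity : (0:ℝ) < t ^ 2),
              div_eq_mul_inv]
            nth_rewrite 2 [← one_mul ((t ^ 2)⁻¹)]
            exact mul_le_mul_of_nonneg_right (Real.abs_sin_le_one _) (by positivity)
        _ = c⁻¹ := int_inv_sq_Ioi_val hc0
        _ = h := by rw [hcdef, inv_inv]
    linarith [neg_abs_le (∫ t in Ioi c, F t)]
  have hlog : Real.log c = Real.log h⁻¹ := by rw [hcdef]
  calc 2 / Real.pi * (h * Real.log h⁻¹) - h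
      = (2 / Real.pi * h) * Real.log c - h := by rw [hlog]; ring
    _ ≤ (∫ t in Ioc 1 c, F t) + ∫ t in Ioi c, F t := by linarith
    _ = _ := hsplit.symm

end PsiAux2

open PsiAux PsiAux2 in
/-- Fix `s ∈ ℝ`. If `ψ` is positive away from `0` and
`ψ(h) = o(h log|h|)` as `h → 0`, then there is `f ∈ L^∞(ℝ)` such that
`(Ψ_f(s+h) − Ψ_f(s))/ψ(h)` is unbounded as `h → 0`.  In particular `Ψ_f` need not
be Lipschitz continuous. -/
theorem Psi_increment_bound_sharp
    (s : ℝ) (ψ : ℝ → ℝ) (hψpos : ∀ h : ℝ, h ≠ 0 → 0 < ψ h)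
    (hψo : Filter.Tendsto (fun h : ℝ => ψ h / (h * Real.log |h|))
      (nhdsWithin 0 {(0 : ℝ)}ᶜ) (nhds 0)) :
    ∃ f : ℝ → ℂ, MemLp f ⊤ (volume : Measure ℝ) ∧
      ∀ M : ℝ, 0 < M → ∀ δ : ℝ, 0 < δ → ∃ h : ℝ, 0 < |h| ∧ |h| < δ ∧
        M < ‖Psi f (s + h) - Psi f s‖ / ψ h := by
  refine ⟨ff s, ?_, ?_⟩
  · exact memLp_top_of_bound (ff_meas s).aestronglyMeasurable 1
      (ae_of_all _ fun t => le_of_eq (ff_norm s t))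
  · intro M hM δ hδ
    obtain ⟨δ', hδ'pos, hδ'⟩ := (Metric.tendsto_nhdsWithin_nhds.mp hψo)
      (1 / (Real.pi * M)) (by positivity)
    set h : ℝ := min (min (δ / 2) (δ' / 2)) (Real.exp (-Real.pi)) with hh
    have hpos : 0 < h := lt_min (lt_min (by linarith) (by linarith)) (Real.exp_pos _)
    have hδh : h < δ :=
      lt_of_le_of_lt (le_trans (min_le_left _ _) (min_le_left _ _)) (by linarith)
    have hδ'h : h < δ' :=
      lt_of_le_of_lt (le_trans (min_le_left _ _) (min_le_right _ _)) (by linarith)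
    have hexp : h ≤ Real.exp (-Real.pi) := min_le_right _ _
    have hlt1 : h < 1 := lt_of_le_of_lt hexp (by
      rw [Real.exp_lt_one_iff]; linarith [Real.pi_pos])
    have hne : h ≠ 0 := ne_of_gt hpos
    refine ⟨h, ?_, ?_, ?_⟩
    · rw [abs_of_pos hpos]; exact hpos
    · rw [abs_of_pos hpos]; exact hδh
    · set L : ℝ := Real.log h⁻¹ with hL
      have hLpos : 0 < L := Real.log_pos ((one_lt_inv₀ hpos).mpr hlt1)
      have hLπ : Real.pi ≤ L := by
        have h1 : Real.log h ≤ -Real.pi := by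
          calc Real.log h ≤ Real.log (Real.exp (-Real.pi)) := Real.log_le_log hpos hexp
            _ = -Real.pi := Real.log_exp _
        rw [hL, Real.log_inv]; linarith
      have hI := I_lower hpos hexp
      set Iv : ℝ := ∫ t in Ioi (1 : ℝ), Real.sin (h * t) / t ^ 2 with hIv
      have hnorm := delta_norm s h
      have habsI : Iv ≤ |Iv| := le_abs_self _
      have hdist := hδ' (x := h) (by simp [hne])
        (by rw [Real.dist_eq, sub_zero, abs_of_pos hpos]; exact hδ'h)
      rw [Real.dist_eq, sub_zero] at hdist
      have hlogh : Real.log |h| = -L := by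
        rw [abs_of_pos hpos, hL, Real.log_inv]; ring
      have hψb : ψ h < (1 / (Real.pi * M)) * (h * L) := by
        rw [hlogh, abs_div, abs_of_pos (hψpos h hne)] at hdist
        have h2 : |h * -L| = h * L := by
          rw [abs_mul, abs_of_pos hpos, abs_neg, abs_of_pos hLpos]
        rw [h2, div_lt_iff₀ (by positivity)] at hdist
        exact hdist
      rw [lt_div_iff₀ (hψpos h hne), hnorm]
      have hMψ : M * ψ h < (h * L) / Real.pi := by
        have h3 := mul_lt_mul_of_pos_left hψb hM
        have h4 : M * ((1 / (Real.pi * M)) * (h * L)) = (h * L) / Real.pi := by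
          field_simp
        linarith [h3, h4.le]
      have h2h : 2 * h ≤ 2 * ((h * L) / Real.pi) := by
        rw [show 2 * ((h * L) / Real.pi) = (2 * (h * L)) / Real.pi by ring,
          le_div_iff₀ Real.pi_pos]
        nlinarith [mul_le_mul_of_nonneg_left hLπ hpos.le]
      have hI2 : 4 * ((h * L) / Real.pi) - 2 * h ≤ 2 * |Iv| := by
        have h5 : 2 / Real.pi * (h * L) = 2 * ((h * L) / Real.pi) := by ring
        rw [h5] at hI
        linarith [habsI]
      have hXpos : 0 < (h * L) / Real.pi := by positivity
      linarith [hMψ, h2h, hI2, hXpos]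
end

section
/- There is a constant C > 0 such that for every essentially bounded measurable f : [-1,1] → ℂ and every s ∈ ℝ with |s| ≥ 2, one has |Ω_f(s)| ≤ C ‖f‖_∞ |s| log|s|; that is, Ω_f(s) = O(s log|s|) as |s| → ∞, uniformly over f with ‖f‖_∞ ≤ 1. -/
open MeasureTheory

/-- The kernel `v_s(t) = (1 − ist − e^{−ist})/t²` for `t ≠ 0`, `v_s(0) = s²/2`. -/
noncomputable def vker (s t : ℝ) : ℂ :=
  if t = 0 then (s : ℂ) ^ 2 / 2
  else (1 - Complex.I * s * t - Complex.exp (-(Complex.I * s * t))) / (t : ℂ) ^ 2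

lemma vker_meas (s : ℝ) : Measurable (vker s) := by
  unfold vker
  apply Measurable.ite (measurableSet_eq) measurable_const
  fun_prop

lemma norm_exp_ist (s t : ℝ) : ‖Complex.exp (-(Complex.I * s * t))‖ = 1 := by
  rw [Complex.norm_exp]
  simp

lemma norm_vker_le_sq (s t : ℝ) (h : |s * t| ≤ 1) : ‖vker s t‖ ≤ s ^ 2 := by
  unfold vker
  by_cases ht : t = 0
  · simp only [ht, if_true]
    rw [norm_div, norm_pow, Complex.norm_real, Real.norm_eq_abs, sq_abs]
    simp only [Complex.norm_ofNat]
    rw [div_le_iff₀ (by norm_num : (0:ℝ) < 2)]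
    nlinarith [sq_nonneg s]
  · simp only [ht, if_false]
    have hz : ‖(-(Complex.I * s * t))‖ ≤ 1 := by
      simpa [abs_mul] using h
    have key := Complex.norm_exp_sub_one_sub_id_le hz
    have hnum : (1 : ℂ) - Complex.I * s * t - Complex.exp (-(Complex.I * s * t))
        = -(Complex.exp (-(Complex.I * s * t)) - 1 - (-(Complex.I * s * t))) := by ring
    rw [norm_div, hnum, norm_neg]
    have habs : ‖(-(Complex.I * ↑s * ↑t))‖ = |s * t| := by simpa [abs_mul] using rfl
    rw [habs] at key
    have ht2 : (0:ℝ) < t ^ 2 := by positivity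
    have : ‖((t:ℂ))^2‖ = t ^ 2 := by
      rw [norm_pow, Complex.norm_real, Real.norm_eq_abs, sq_abs]
    rw [this, div_le_iff₀ ht2]
    calc ‖Complex.exp (-(Complex.I * ↑s * ↑t)) - 1 - -(Complex.I * ↑s * ↑t)‖
        ≤ |s * t| ^ 2 := key
      _ = s ^ 2 * t ^ 2 := by rw [abs_mul, mul_pow, sq_abs, sq_abs]

lemma norm_vker_le_tail (s t : ℝ) (ht : t ≠ 0) : ‖vker s t‖ ≤ 2 / t ^ 2 + |s| / |t| := by
  unfold vker
  simp only [ht, if_false]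
  have ht2 : (0:ℝ) < t ^ 2 := by positivity
  have h2 : ‖((t:ℂ))^2‖ = t ^ 2 := by
    rw [norm_pow, Complex.norm_real, Real.norm_eq_abs, sq_abs]
  rw [norm_div, h2, div_le_iff₀ ht2]
  have hnum : ‖(1:ℂ) - Complex.I * s * t - Complex.exp (-(Complex.I * s * t))‖
      ≤ 2 + |s| * |t| := by
    calc ‖(1:ℂ) - Complex.I * s * t - Complex.exp (-(Complex.I * s * t))‖
        ≤ ‖(1:ℂ) - Complex.I * s * t‖ + ‖Complex.exp (-(Complex.I * s * t))‖ :=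
          norm_sub_le _ _
      _ ≤ (‖(1:ℂ)‖ + ‖Complex.I * (s:ℂ) * t‖) + 1 := by
          rw [norm_exp_ist]; exact add_le_add (norm_sub_le _ _) le_rfl
      _ = 2 + |s| * |t| := by
          simp [Complex.norm_real, Real.norm_eq_abs, abs_mul]; ring
  calc ‖(1:ℂ) - Complex.I * s * t - Complex.exp (-(Complex.I * s * t))‖
      ≤ 2 + |s| * |t| := hnum
    _ = (2 / t ^ 2 + |s| / |t|) * t ^ 2 := by
        have h1 : |t| ≠ 0 := abs_ne_zero.mpr ht
        have h0 : t ^ 2 = |t| ^ 2 := (sq_abs t).symm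
        rw [h0]
        field_simp

lemma norm_vker_le_global (s t : ℝ) : ‖vker s t‖ ≤ 3 * s ^ 2 := by
  by_cases ht : t = 0
  · have : |s * t| ≤ 1 := by simp [ht]
    nlinarith [norm_vker_le_sq s t this, sq_nonneg s]
  by_cases h : |s * t| ≤ 1
  · nlinarith [norm_vker_le_sq s t h, sq_nonneg s]
  · push_neg at h
    rw [abs_mul] at h
    have ht' : (0:ℝ) < |t| := abs_pos.mpr ht
    have hs' : (0:ℝ) < |s| := by nlinarith [abs_nonneg s, abs_nonneg t]
    have h1 : 1 / |t| ≤ |s| := by rw [div_le_iff₀ ht']; nlinarith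
    have h2 : 1 / t ^ 2 ≤ s ^ 2 := by
      rw [← sq_abs t, ← sq_abs s, div_le_iff₀ (by positivity)]
      nlinarith
    have := norm_vker_le_tail s t ht
    have h3 : |s| / |t| = |s| * (1 / |t|) := by ring
    have h4 : |s| * (1/|t|) ≤ |s| * |s| := by
      exact mul_le_mul_of_nonneg_left h1 (abs_nonneg s)
    calc ‖vker s t‖ ≤ 2 / t^2 + |s| / |t| := this
      _ ≤ 2 * s^2 + |s| * |s| := by
          have h5 : 2 / t^2 = 2 * (1 / t^2) := by ring
          rw [h3, h5]
          have h6 : 2 * (1/t^2) ≤ 2 * s^2 := by linarith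
          linarith
      _ = 3 * s ^ 2 := by rw [← sq_abs s]; ring

lemma vker_integrableOn (s : ℝ) : IntegrableOn (vker s) (Set.Icc (-1:ℝ) 1) := by
  exact (integrable_const (3 * s ^ 2 : ℝ)).mono'
    ((vker_meas s).aestronglyMeasurable)
    (Filter.Eventually.of_forall fun t => norm_vker_le_global s t)

lemma integral_norm_vker_le (s : ℝ) (hs : 2 ≤ |s|) :
    ∫ t in Set.Icc (-1:ℝ) 1, ‖vker s t‖ ≤ 11 * |s| * Real.log |s| := by
  set a : ℝ := |s|⁻¹ with ha_def
  have hs0 : (0:ℝ) < |s| := by linarith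
  have ha : 0 < a := by positivity
  have ha2 : a ≤ 1/2 := by
    rw [ha_def]
    rw [inv_le_comm₀ hs0 (by norm_num)]
    linarith
  have ha1 : a ≤ 1 := by linarith
  have hInt : IntegrableOn (fun t => ‖vker s t‖) (Set.Icc (-1:ℝ) 1) :=
    (vker_integrableOn s).norm
  have hIcc : ∀ u v : ℝ, -1 ≤ u → u ≤ v → v ≤ 1 →
      IntervalIntegrable (fun t => ‖vker s t‖) volume u v := by
    intro u v hu huv hv
    rw [intervalIntegrable_iff]
    exact hInt.mono_set (le_trans Set.uIoc_subset_uIcc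
      (Set.uIcc_subset_Icc ⟨hu, by linarith⟩ ⟨by linarith, hv⟩))
  -- convert to interval integral
  have hconv : ∫ t in Set.Icc (-1:ℝ) 1, ‖vker s t‖
      = ∫ t in (-1:ℝ)..1, ‖vker s t‖ := by
    rw [intervalIntegral.integral_of_le (by norm_num : (-1:ℝ) ≤ 1),
      MeasureTheory.integral_Icc_eq_integral_Ioc]
  have h1 : IntervalIntegrable (fun t => ‖vker s t‖) volume (-1) (-a) :=
    hIcc _ _ le_rfl (by linarith) (by linarith)
  have h2 : IntervalIntegrable (fun t => ‖vker s t‖) volume (-a) a :=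
    hIcc _ _ (by linarith) (by linarith) (by linarith)
  have h3 : IntervalIntegrable (fun t => ‖vker s t‖) volume a 1 :=
    hIcc _ _ (by linarith) ha1 le_rfl
  have hsplit : ∫ t in (-1:ℝ)..1, ‖vker s t‖
      = (∫ t in (-1:ℝ)..(-a), ‖vker s t‖) + (∫ t in (-a)..a, ‖vker s t‖)
        + ∫ t in a..(1:ℝ), ‖vker s t‖ := by
    rw [add_assoc, intervalIntegral.integral_add_adjacent_intervals h2 h3,
      intervalIntegral.integral_add_adjacent_intervals h1 (h2.trans h3)]
  -- middle bound
  have hmid : ∫ t in (-a)..a, ‖vker s t‖ ≤ 2 * |s| := by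
    have hb : ∫ t in (-a)..a, ‖vker s t‖ ≤ ∫ _t in (-a)..a, (s^2 : ℝ) := by
      apply intervalIntegral.integral_mono_on (by linarith) h2 intervalIntegrable_const
      intro t ht
      apply norm_vker_le_sq
      rw [abs_mul]
      calc |s| * |t| ≤ |s| * a := by
            apply mul_le_mul_of_nonneg_left _ (abs_nonneg s)
            exact abs_le.mpr ⟨ht.1, ht.2⟩
        _ = 1 := mul_inv_cancel₀ (ne_of_gt hs0)
    rw [intervalIntegral.integral_const] at hb
    have heq : (a - -a) • (s^2 : ℝ) = 2 * |s| := by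
      rw [smul_eq_mul, ha_def]
      field_simp
      nlinarith [sq_abs s]
    linarith [heq ▸ hb]
  -- right tail
  have hnotR : (0:ℝ) ∉ Set.uIcc a 1 := by
    rw [Set.uIcc_of_le ha1]
    intro h
    exact absurd h.1 (not_le.mpr ha)
  have hc1 : IntervalIntegrable (fun t:ℝ => 2 / t^2) volume a 1 := by
    apply ContinuousOn.intervalIntegrable
    apply ContinuousOn.div continuousOn_const (by fun_prop)
    intro t ht
    exact pow_ne_zero _ (fun h => hnotR (h ▸ ht))
  have hc2 : IntervalIntegrable (fun t:ℝ => |s| * (1 / t)) volume a 1 := by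
    apply ContinuousOn.intervalIntegrable
    apply ContinuousOn.mul continuousOn_const
    apply ContinuousOn.div continuousOn_const continuousOn_id
    intro t ht
    exact fun h => hnotR (h ▸ ht)
  have h2t : ∫ t in a..(1:ℝ), 2 / t^2 = 2 * (|s| - 1) := by
    have he : ∀ t:ℝ, 2 / t^2 = 2 * t ^ (-2:ℤ) := fun t => by
      rw [zpow_neg, div_eq_mul_inv, zpow_two, sq]
    simp_rw [he]
    rw [intervalIntegral.integral_const_mul,
      integral_zpow (Or.inr ⟨by norm_num, hnotR⟩)]
    rw [ha_def]
    norm_num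
    ring
  have hlog : ∫ t in a..(1:ℝ), |s| * (1 / t) = |s| * Real.log |s| := by
    rw [intervalIntegral.integral_const_mul, integral_one_div hnotR]
    rw [ha_def, one_div, inv_inv]
  have hR : ∫ t in a..(1:ℝ), ‖vker s t‖ ≤ 2 * |s| + |s| * Real.log |s| := by
    have hmono : ∫ t in a..(1:ℝ), ‖vker s t‖
        ≤ ∫ t in a..(1:ℝ), (2 / t^2 + |s| * (1 / t)) := by
      apply intervalIntegral.integral_mono_on ha1 h3 (hc1.add hc2)
      intro t ht
      have htpos : 0 < t := lt_of_lt_of_le ha ht.1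
      have := norm_vker_le_tail s t (ne_of_gt htpos)
      rwa [abs_of_pos htpos, div_eq_mul_one_div |s| t] at this
    rw [intervalIntegral.integral_add hc1 hc2, h2t, hlog] at hmono
    linarith
  -- left tail
  have hnotL : (0:ℝ) ∉ Set.uIcc (-1:ℝ) (-a) := by
    rw [Set.uIcc_of_le (by linarith : (-1:ℝ) ≤ -a)]
    intro h
    have := h.2
    linarith
  have hc1' : IntervalIntegrable (fun t:ℝ => 2 / t^2) volume (-1) (-a) := by
    apply ContinuousOn.intervalIntegrable
    apply ContinuousOn.div continuousOn_const (by fun_prop)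
    intro t ht
    exact pow_ne_zero _ (fun h => hnotL (h ▸ ht))
  have hc2' : IntervalIntegrable (fun t:ℝ => |s| * -(1 / t)) volume (-1) (-a) := by
    apply ContinuousOn.intervalIntegrable
    apply ContinuousOn.mul continuousOn_const
    apply ContinuousOn.neg
    apply ContinuousOn.div continuousOn_const continuousOn_id
    intro t ht
    exact fun h => hnotL (h ▸ ht)
  have h2t' : ∫ t in (-1:ℝ)..(-a), 2 / t^2 = 2 * (|s| - 1) := by
    have he : ∀ t:ℝ, 2 / t^2 = 2 * t ^ (-2:ℤ) := fun t => by
      rw [zpow_neg, div_eq_mul_inv, zpow_two, sq]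
    simp_rw [he]
    rw [intervalIntegral.integral_const_mul,
      integral_zpow (Or.inr ⟨by norm_num, hnotL⟩)]
    rw [ha_def]
    norm_num
    ring
  have hlog' : ∫ t in (-1:ℝ)..(-a), |s| * -(1 / t) = |s| * Real.log |s| := by
    rw [intervalIntegral.integral_const_mul]
    have : ∫ t in (-1:ℝ)..(-a), -(1 / t) = - ∫ t in (-1:ℝ)..(-a), 1 / t :=
      intervalIntegral.integral_neg
    rw [this, integral_one_div hnotL]
    have : (-a) / (-1:ℝ) = a := by ring
    rw [this, ha_def, Real.log_inv]
    ring
  have hL : ∫ t in (-1:ℝ)..(-a), ‖vker s t‖ ≤ 2 * |s| + |s| * Real.log |s| := by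
    have hmono : ∫ t in (-1:ℝ)..(-a), ‖vker s t‖
        ≤ ∫ t in (-1:ℝ)..(-a), (2 / t^2 + |s| * -(1 / t)) := by
      apply intervalIntegral.integral_mono_on (by linarith) h1 (hc1'.add hc2')
      intro t ht
      have htneg : t < 0 := lt_of_le_of_lt ht.2 (by linarith)
      have ht0 : t ≠ 0 := ne_of_lt htneg
      have hb := norm_vker_le_tail s t ht0
      rw [abs_of_neg htneg] at hb
      have he2 : |s| / (-t) = |s| * -(1/t) := by
        rw [div_neg, mul_neg, mul_one_div]
      rw [he2] at hb
      exact hb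
    rw [intervalIntegral.integral_add hc1' hc2', h2t', hlog'] at hmono
    linarith
  -- combine
  have hlog2 : Real.log 2 ≤ Real.log |s| := Real.log_le_log (by norm_num) hs
  have hlog2' : (0.6931471803 : ℝ) < Real.log 2 := Real.log_two_gt_d9
  rw [hconv, hsplit]
  nlinarith [hmid, hR, hL, hs0]


/-- `Ω_f(s) = ∫_{-1}^{1} v_s(t) f(t) dt`. -/
noncomputable def Omega (f : ℝ → ℂ) (s : ℝ) : ℂ :=
  ∫ t in Set.Icc (-1 : ℝ) 1, vker s t * f t

/-- There is a constant `C > 0` such that for every essentially bounded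
measurable `f : [-1,1] → ℂ` and every `s` with `|s| ≥ 2`,
`|Ω_f(s)| ≤ C ‖f‖_∞ |s| log|s|`. -/
theorem Omega_growth_bound :
    ∃ C : ℝ, 0 < C ∧ ∀ f : ℝ → ℂ,
      MemLp f ⊤ (volume.restrict (Set.Icc (-1 : ℝ) 1)) →
      ∀ s : ℝ, 2 ≤ |s| →
        ‖Omega f s‖ ≤ C * (eLpNorm f ⊤ (volume.restrict (Set.Icc (-1 : ℝ) 1))).toReal
          * |s| * Real.log |s| := by
  refine ⟨11, by norm_num, fun f hf s hs => ?_⟩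
  set μ := volume.restrict (Set.Icc (-1 : ℝ) 1) with hμ
  set M : ℝ := (eLpNorm f ⊤ μ).toReal with hM
  have hM0 : 0 ≤ M := ENNReal.toReal_nonneg
  have htop : eLpNormEssSup f μ ≠ ⊤ := by
    have h := hf.2
    rw [eLpNorm_exponent_top] at h
    exact h.ne
  have hf_ae : ∀ᵐ t ∂μ, ‖f t‖ ≤ M := by
    filter_upwards [ae_le_eLpNormEssSup (f := f) (μ := μ)] with t ht
    have h1 : ((‖f t‖₊ : ENNReal)).toReal ≤ (eLpNormEssSup f μ).toReal :=
      ENNReal.toReal_mono htop ht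
    simpa [hM, eLpNorm_exponent_top] using h1
  have hprod : Integrable (fun t => vker s t * f t) μ := by
    apply (integrable_const (3 * s ^ 2 * M) (μ := μ)).mono'
      (((vker_meas s).aestronglyMeasurable).mul hf.1)
    filter_upwards [hf_ae] with t ht
    show ‖vker s t * f t‖ ≤ 3 * s ^ 2 * M
    rw [norm_mul]
    exact mul_le_mul (norm_vker_le_global s t) ht (norm_nonneg _) (by positivity)
  have hvint : Integrable (fun t => ‖vker s t‖) μ := (vker_integrableOn s).norm
  have step1 : ‖Omega f s‖ ≤ ∫ t, ‖vker s t * f t‖ ∂μ :=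
    norm_integral_le_integral_norm _
  have step2 : ∫ t, ‖vker s t * f t‖ ∂μ ≤ ∫ t, M * ‖vker s t‖ ∂μ := by
    apply integral_mono_ae hprod.norm (hvint.const_mul M)
    filter_upwards [hf_ae] with t ht
    rw [norm_mul]
    calc ‖vker s t‖ * ‖f t‖ ≤ ‖vker s t‖ * M :=
          mul_le_mul_of_nonneg_left ht (norm_nonneg _)
      _ = M * ‖vker s t‖ := mul_comm _ _
  have step3 : ∫ t, M * ‖vker s t‖ ∂μ = M * ∫ t, ‖vker s t‖ ∂μ :=
    integral_const_mul M _
  have step4 : M * ∫ t, ‖vker s t‖ ∂μ ≤ M * (11 * |s| * Real.log |s|) :=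
    mul_le_mul_of_nonneg_left (integral_norm_vker_le s hs) hM0
  calc ‖Omega f s‖ ≤ ∫ t, ‖vker s t * f t‖ ∂μ := step1
    _ ≤ ∫ t, M * ‖vker s t‖ ∂μ := step2
    _ = M * ∫ t, ‖vker s t‖ ∂μ := step3
    _ ≤ M * (11 * |s| * Real.log |s|) := step4
    _ = 11 * M * |s| * Real.log |s| := by ring
end

section
/- Let h : ℝ → ℂ be a function of bounded variation on ℝ with h ∈ L¹(ℝ), and define g(x) = ∫_{-∞}^{x} h(t) dt. Assume g ∈ L¹(ℝ). Then the Fourier transform ĝ(s) = ∫_ℝ e^{-ist} g(t) dt belongs to L¹(ℝ). -/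
open MeasureTheory

open Set Complex
open scoped ENNReal Real

lemma bv_tsum_le (h : ℝ → ℂ) {ε : ℝ} (hε : 0 < ε) (u : ℝ) :
    (∑' k : ℤ, edist (h (u + k • ε + ε)) (h (u + k • ε))) ≤ eVariationOn h Set.univ := by
  rw [ENNReal.tsum_eq_iSup_sum]
  apply iSup_le
  intro F
  set N : ℕ := F.sup fun k => k.natAbs with hN
  have hFsub : F ⊆ Finset.image (fun j : ℕ => (-(N : ℤ) + j) ) (Finset.range (2 * N + 1)) := by
    intro k hk
    have h1 : k.natAbs ≤ N := Finset.le_sup (f := fun k : ℤ => k.natAbs) hk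
    have h2 : |k| ≤ (N : ℤ) := by
      rw [Int.abs_eq_natAbs]; exact_mod_cast h1
    obtain ⟨hk1, hk2⟩ := abs_le.mp h2
    refine Finset.mem_image.2 ⟨(k + N).toNat, ?_, ?_⟩
    · rw [Finset.mem_range]
      omega
    · omega
  refine le_trans (Finset.sum_le_sum_of_subset hFsub) ?_
  rw [Finset.sum_image (by intro a _ b _ hab; simpa using hab)]
  have := eVariationOn.sum_le (f := h) (s := Set.univ) (n := 2 * N + 1)
    (u := fun j : ℕ => u + (-(N : ℤ) + j) • ε) ?_ (fun i => Set.mem_univ _)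
  · refine le_trans (le_of_eq ?_) this
    apply Finset.sum_congr rfl
    intro j _
    congr 2
    simp only [zsmul_eq_mul]
    push_cast
    ring
  · intro a b hab
    simp only [zsmul_eq_mul]
    have hc : ((-(N : ℤ) + a : ℤ) : ℝ) ≤ ((-(N : ℤ) + b : ℤ) : ℝ) := by exact_mod_cast by omega
    nlinarith


lemma bv_shift_lintegral (h : ℝ → ℂ) (hm : AEStronglyMeasurable h (volume : Measure ℝ))
    {ε : ℝ} (hε : 0 < ε) :
    ∫⁻ t : ℝ, edist (h (t + ε)) (h t) ≤ ENNReal.ofReal ε * eVariationOn h Set.univ := by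
  set φ : ℝ → ℝ≥0∞ := fun t => edist (h (t + ε)) (h t) with hφ
  have hmeas : ∀ c : ℝ, AEMeasurable (fun t => φ (t + c)) (volume : Measure ℝ) := by
    intro c
    have h1 : AEMeasurable h (volume : Measure ℝ) := hm.aemeasurable
    have h2 : ∀ d : ℝ, AEMeasurable (fun t : ℝ => h (t + d)) (volume : Measure ℝ) := fun d =>
      h1.comp_quasiMeasurePreserving (measurePreserving_add_right volume d).quasiMeasurePreserving
    have : AEMeasurable (fun t : ℝ => edist (h (t + c + ε)) (h (t + c))) volume := by
      have ha : AEMeasurable (fun t : ℝ => h (t + (c + ε))) volume := h2 (c + ε)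
      have hb : AEMeasurable (fun t : ℝ => h (t + c)) volume := h2 c
      exact (ha.congr (by filter_upwards with t; rw [add_assoc])).edist hb
    exact this
  have hcov : (⋃ k : ℤ, Ico (k • ε) ((k + 1) • ε)) = (univ : Set ℝ) := iUnion_Ico_zsmul hε
  have hdisj : Pairwise (Function.onFun Disjoint fun k : ℤ => Ico (k • ε) ((k + 1) • ε)) := by
    intro i j hij
    simp only [Function.onFun, Set.Ico_disjoint_Ico, zsmul_eq_mul]
    rcases lt_or_gt_of_ne hij with hlt | hlt
    · have : ((i : ℝ) + 1) ≤ (j : ℝ) := by exact_mod_cast hlt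
      refine le_trans (min_le_left _ _) (le_trans ?_ (le_max_right _ _))
      push_cast; nlinarith
    · have : ((j : ℝ) + 1) ≤ (i : ℝ) := by exact_mod_cast hlt
      refine le_trans (min_le_right _ _) (le_trans ?_ (le_max_left _ _))
      push_cast; nlinarith
  calc ∫⁻ t : ℝ, φ t = ∫⁻ t in ⋃ k : ℤ, Ico (k • ε) ((k + 1) • ε), φ t := by
        rw [hcov, setLIntegral_univ]
    _ = ∑' k : ℤ, ∫⁻ t in Ico (k • ε) ((k + 1) • ε), φ t :=
        lintegral_iUnion (fun k => measurableSet_Ico) hdisj φ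
    _ = ∑' k : ℤ, ∫⁻ u in Ico (0 : ℝ) ε, φ (u + k • ε) := by
        refine tsum_congr fun k => ?_
        rw [(measurePreserving_add_right volume (k • ε)).setLIntegral_comp_emb
          (measurableEmbedding_addRight (k • ε)) φ (Ico 0 ε)]
        congr 1
        rw [Set.image_add_const_Ico]
        simp only [zsmul_eq_mul]
        congr 1 <;> push_cast <;> ring
    _ = ∫⁻ u in Ico (0 : ℝ) ε, ∑' k : ℤ, φ (u + k • ε) := by
        rw [← lintegral_tsum fun k => ((hmeas (k • ε))).restrict]
    _ ≤ ∫⁻ _ in Ico (0 : ℝ) ε, eVariationOn h Set.univ := by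
        refine lintegral_mono fun u => ?_
        exact bv_tsum_le h hε u
    _ = ENNReal.ofReal ε * eVariationOn h Set.univ := by
        rw [setLIntegral_const, Real.volume_Ico, sub_zero, mul_comm]


lemma lintegral_shift_window {ψ : ℝ → ℝ≥0∞} (hψ : AEMeasurable ψ (volume : Measure ℝ))
    {δ : ℝ} (hδ : 0 < δ) :
    (∫⁻ t : ℝ, ∫⁻ u in Set.Ioc t (t + δ), ψ u) ≤ ENNReal.ofReal δ * ∫⁻ u, ψ u := by
  obtain ⟨ψ', hψ'm, hψeq⟩ := hψ
  have hinner : ∀ t : ℝ, (∫⁻ u in Set.Ioc t (t + δ), ψ u) = ∫⁻ u in Set.Ioc t (t + δ), ψ' u :=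
    fun t => lintegral_congr_ae (ae_restrict_of_ae hψeq)
  have htotal : (∫⁻ u, ψ u) = ∫⁻ u, ψ' u := lintegral_congr_ae hψeq
  simp only [hinner, htotal]
  -- rewrite inner integral as indicator
  have key : (∫⁻ t : ℝ, ∫⁻ u in Set.Ioc t (t + δ), ψ' u)
      = ∫⁻ t : ℝ, ∫⁻ u : ℝ, (Set.Ioc t (t + δ)).indicator ψ' u := by
    refine lintegral_congr fun t => ?_
    rw [lintegral_indicator measurableSet_Ioc]
  rw [key]
  have hswap : (∫⁻ t : ℝ, ∫⁻ u : ℝ, (Set.Ioc t (t + δ)).indicator ψ' u)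
      = ∫⁻ u : ℝ, ∫⁻ t : ℝ, (Set.Ioc t (t + δ)).indicator ψ' u := by
    apply lintegral_lintegral_swap
    have : (Function.uncurry fun t u => (Set.Ioc t (t + δ)).indicator ψ' u)
        = Set.indicator {p : ℝ × ℝ | p.1 < p.2 ∧ p.2 ≤ p.1 + δ} (fun p => ψ' p.2) := by
      ext p
      simp [Function.uncurry, Set.indicator_apply, Set.mem_Ioc]
    rw [this]
    exact (Measurable.indicator (hψ'm.comp measurable_snd)
      ((measurableSet_lt measurable_fst measurable_snd).inter
        (measurableSet_le measurable_snd (measurable_fst.add_const δ)))).aemeasurable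
  rw [hswap]
  have hfix : ∀ u : ℝ, (∫⁻ t : ℝ, (Set.Ioc t (t + δ)).indicator ψ' u) = ψ' u * ENNReal.ofReal δ := by
    intro u
    have : (fun t : ℝ => (Set.Ioc t (t + δ)).indicator ψ' u)
        = (Set.Ico (u - δ) u).indicator (fun _ => ψ' u) := by
      ext t
      simp only [Set.indicator_apply, Set.mem_Ioc, Set.mem_Ico]
      congr 1
      · simp only [eq_iff_iff]
        constructor
        · rintro ⟨h1, h2⟩; constructor <;> linarith
        · rintro ⟨h1, h2⟩; constructor <;> linarith
    rw [this, lintegral_indicator measurableSet_Ico, setLIntegral_const, Real.volume_Ico]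
    congr 2
    ring
  simp only [hfix]
  rw [lintegral_mul_const'' _ hψ'm.aemeasurable]
  · rw [mul_comm]


lemma fourier_shift {f : ℝ → ℂ} (hf : Integrable f (volume : Measure ℝ)) {s δ : ℝ}
    (hexp : Complex.exp (-(Complex.I * δ * s)) = -1) :
    (∫ t : ℝ, Complex.exp (-(Complex.I * s * t)) * f t)
      = (2⁻¹ : ℂ) * ∫ t : ℝ, Complex.exp (-(Complex.I * s * t)) * (f t - f (t + δ)) := by
  set e : ℝ → ℂ := fun t => Complex.exp (-(Complex.I * s * t)) with he
  have hker : ∀ t : ℝ, e (t + δ) = - e t := by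
    intro t
    rw [he]
    simp only
    push_cast
    rw [show -(Complex.I * ↑s * (↑t + ↑δ)) = -(Complex.I * s * t) + -(Complex.I * δ * s) by ring,
      Complex.exp_add, hexp]
    ring
  have hbdd : ∀ f' : ℝ → ℂ, Integrable f' (volume : Measure ℝ) →
      Integrable (fun t => e t * f' t) (volume : Measure ℝ) := by
    intro f' hf'
    apply hf'.bdd_mul (c := 1)
    · apply Continuous.aestronglyMeasurable
      fun_prop
    · refine Filter.Eventually.of_forall fun t => ?_
      rw [he]
      simp only [Complex.norm_exp]
      rw [show (-(Complex.I * ↑s * ↑t)).re = 0 by simp]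
      simp
  have hshift : (∫ t : ℝ, e t * f (t + δ)) = - ∫ t : ℝ, e t * f t := by
    calc (∫ t : ℝ, e t * f (t + δ)) = ∫ t : ℝ, -(e (t + δ) * f (t + δ)) := by
          refine integral_congr_ae (Filter.Eventually.of_forall fun t => ?_)
          simp only
          rw [hker]; ring
      _ = - ∫ t : ℝ, e (t + δ) * f (t + δ) := integral_neg _
      _ = - ∫ t : ℝ, e t * f t := by
          rw [integral_add_right_eq_self (fun x : ℝ => e x * f x) δ]
  have hsub : (∫ t : ℝ, e t * (f t - f (t + δ)))
      = (∫ t : ℝ, e t * f t) - ∫ t : ℝ, e t * f (t + δ) := by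
    simp_rw [mul_sub]
    exact integral_sub (hbdd f hf) (hbdd _ (hf.comp_add_right δ))
  rw [hsub, hshift]
  ring


lemma decay_bound (h : ℝ → ℂ) (hBV : BoundedVariationOn h Set.univ)
    (hL1 : Integrable h (volume : Measure ℝ))
    (g : ℝ → ℂ) (hg : ∀ x : ℝ, g x = ∫ t in Set.Iic x, h t)
    (hgL1 : Integrable g (volume : Measure ℝ)) {s : ℝ} (hs : s ≠ 0) :
    ‖∫ t : ℝ, Complex.exp (-(Complex.I * s * t)) * g t‖
      ≤ (π ^ 2 * (eVariationOn h Set.univ).toReal / 4) / s ^ 2 := by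
  set V : ℝ≥0∞ := eVariationOn h Set.univ with hV
  set δ : ℝ := π / |s| with hδdef
  have hδpos : 0 < δ := div_pos Real.pi_pos (abs_pos.mpr hs)
  have hexp : Complex.exp (-(Complex.I * δ * s)) = -1 := by
    rcases hs.lt_or_gt with hneg | hpos
    · have habs : |s| = -s := abs_of_neg hneg
      have : δ * s = -π := by
        rw [hδdef, habs, div_mul_eq_mul_div, div_neg, mul_div_assoc, div_self hs, mul_one]
      rw [show -(Complex.I * ↑δ * ↑s) = -((δ * s : ℝ) * Complex.I) by push_cast; ring, this]
      push_cast
      rw [show -(-↑π * Complex.I) = (↑π * Complex.I : ℂ) by ring]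
      exact Complex.exp_pi_mul_I
    · have habs : |s| = s := abs_of_pos hpos
      have : δ * s = π := by
        rw [hδdef, habs]; field_simp
      rw [show -(Complex.I * ↑δ * ↑s) = -((δ * s : ℝ) * Complex.I) by push_cast; ring, this]
      rw [Complex.exp_neg, Complex.exp_pi_mul_I]
      norm_num
  set Δ : ℝ → ℂ := fun t => g t - g (t + δ) with hΔ
  have hΔL1 : Integrable Δ (volume : Measure ℝ) := hgL1.sub (hgL1.comp_add_right δ)
  have step1 := fourier_shift hgL1 hexp
  have step2 := fourier_shift hΔL1 hexp
  set D : ℝ → ℂ := fun t => Δ t - Δ (t + δ) with hD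
  -- difference formula
  have hdiff : ∀ a b : ℝ, g b - g a = ∫ u in a..b, h u := by
    intro a b
    rw [hg a, hg b]
    exact intervalIntegral.integral_Iic_sub_Iic hL1.integrableOn hL1.integrableOn
  have hw : ∀ t : ℝ, D t = ∫ u in t..(t + δ), (h (u + δ) - h u) := by
    intro t
    have h1 : (∫ u in t..(t + δ), h (u + δ)) = ∫ u in (t + δ)..(t + δ + δ), h u := by
      simpa using intervalIntegral.integral_comp_add_right (a := t) (b := t + δ) (fun u => h u) δ
    rw [intervalIntegral.integral_sub ((hL1.comp_add_right δ).intervalIntegrable)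
      hL1.intervalIntegrable, h1, ← hdiff, ← hdiff]
    simp only [hD, hΔ]
    ring
  -- lintegral bound on D
  have hψmeas : AEMeasurable (fun u : ℝ => edist (h (u + δ)) (h u)) (volume : Measure ℝ) := by
    have h1 : AEMeasurable h (volume : Measure ℝ) := hL1.aestronglyMeasurable.aemeasurable
    exact (h1.comp_quasiMeasurePreserving
      (measurePreserving_add_right volume δ).quasiMeasurePreserving).edist h1
  have hDnorm : ∀ t : ℝ, ENNReal.ofReal ‖D t‖ ≤ ∫⁻ u in Set.Ioc t (t + δ), edist (h (u + δ)) (h u) := by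
    intro t
    have hIoc : IntegrableOn (fun u : ℝ => h (u + δ) - h u) (Set.Ioc t (t + δ)) volume :=
      ((hL1.comp_add_right δ).sub hL1).integrableOn
    have h2 : ‖D t‖ ≤ ∫ u in Set.Ioc t (t + δ), ‖h (u + δ) - h u‖ := by
      rw [hw t, intervalIntegral.integral_of_le (by linarith)]
      exact norm_integral_le_integral_norm _
    calc ENNReal.ofReal ‖D t‖ ≤ ENNReal.ofReal (∫ u in Set.Ioc t (t + δ), ‖h (u + δ) - h u‖) :=
          ENNReal.ofReal_le_ofReal h2
      _ ≤ ∫⁻ u in Set.Ioc t (t + δ), ENNReal.ofReal ‖h (u + δ) - h u‖ :=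
          le_of_eq (ofReal_integral_eq_lintegral_ofReal hIoc.norm
            (Filter.Eventually.of_forall fun u => norm_nonneg _))
      _ = ∫⁻ u in Set.Ioc t (t + δ), edist (h (u + δ)) (h u) := by
          refine lintegral_congr fun u => ?_
          rw [edist_eq_enorm_sub, ofReal_norm]
  have hL : (∫⁻ t : ℝ, ENNReal.ofReal ‖D t‖)
      ≤ ENNReal.ofReal δ * (ENNReal.ofReal δ * V) := by
    calc (∫⁻ t : ℝ, ENNReal.ofReal ‖D t‖)
        ≤ ∫⁻ t : ℝ, ∫⁻ u in Set.Ioc t (t + δ), edist (h (u + δ)) (h u) :=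
          lintegral_mono hDnorm
      _ ≤ ENNReal.ofReal δ * ∫⁻ u : ℝ, edist (h (u + δ)) (h u) :=
          lintegral_shift_window hψmeas hδpos
      _ ≤ ENNReal.ofReal δ * (ENNReal.ofReal δ * V) := by
          exact mul_le_mul_right (bv_shift_lintegral h hL1.aestronglyMeasurable hδpos) _
  -- norm bound on the integral of e * D
  have hVne : V ≠ ⊤ := hBV
  have hnormJ : ‖∫ t : ℝ, Complex.exp (-(Complex.I * s * t)) * D t‖ ≤ δ * δ * V.toReal := by
    have h0 : ‖∫ t : ℝ, Complex.exp (-(Complex.I * s * t)) * D t‖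
        ≤ (∫⁻ t : ℝ, ENNReal.ofReal ‖Complex.exp (-(Complex.I * s * t)) * D t‖).toReal :=
      norm_integral_le_lintegral_norm _
    have h1 : (∫⁻ t : ℝ, ENNReal.ofReal ‖Complex.exp (-(Complex.I * s * t)) * D t‖)
        = ∫⁻ t : ℝ, ENNReal.ofReal ‖D t‖ := by
      refine lintegral_congr fun t => ?_
      congr 1
      rw [norm_mul]
      rw [show ‖Complex.exp (-(Complex.I * ↑s * ↑t))‖ = 1 by
        simp only [Complex.norm_exp]
        rw [show (-(Complex.I * ↑s * ↑t)).re = 0 by simp]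
        simp]
      ring
    rw [h1] at h0
    refine h0.trans ?_
    have h2 : (ENNReal.ofReal δ * (ENNReal.ofReal δ * V)).toReal = δ * δ * V.toReal := by
      rw [ENNReal.toReal_mul, ENNReal.toReal_mul, ENNReal.toReal_ofReal hδpos.le]
      ring
    rw [← h2]
    exact ENNReal.toReal_mono (by
      refine ENNReal.mul_ne_top ENNReal.ofReal_ne_top (ENNReal.mul_ne_top ENNReal.ofReal_ne_top hVne)) hL
  -- assemble
  rw [step1, step2]
  have hδsq : δ * δ = π ^ 2 / s ^ 2 := by
    rw [hδdef, div_mul_div_comm, ← _root_.sq_abs s]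
    ring
  calc ‖(2⁻¹ : ℂ) * ((2⁻¹ : ℂ) * ∫ t : ℝ, Complex.exp (-(Complex.I * s * t)) * D t)‖
      = 4⁻¹ * ‖∫ t : ℝ, Complex.exp (-(Complex.I * s * t)) * D t‖ := by
        rw [norm_mul, norm_mul]
        norm_num
        ring
    _ ≤ 4⁻¹ * (δ * δ * V.toReal) := by
        linarith [hnormJ]
    _ = (π ^ 2 * V.toReal / 4) / s ^ 2 := by
        rw [hδsq]
        field_simp


/-- If `h : ℝ → ℂ` is of bounded variation on `ℝ` with `h ∈ L¹(ℝ)`,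
`g(x) = ∫_{-∞}^x h(t) dt`, and `g ∈ L¹(ℝ)`, then the Fourier transform
`ĝ(s) = ∫ e^{-ist} g(t) dt` belongs to `L¹(ℝ)`. -/
theorem fourierTransform_integrable_of_bv
    (h : ℝ → ℂ) (hBV : BoundedVariationOn h Set.univ) (hL1 : Integrable h (volume : Measure ℝ))
    (g : ℝ → ℂ) (hg : ∀ x : ℝ, g x = ∫ t in Set.Iic x, h t)
    (hgL1 : Integrable g (volume : Measure ℝ)) :
    Integrable (fun s : ℝ => ∫ t : ℝ, Complex.exp (-(Complex.I * s * t)) * g t)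
      (volume : Measure ℝ) := by
  set F : ℝ → ℂ := fun s : ℝ => ∫ t : ℝ, Complex.exp (-(Complex.I * s * t)) * g t with hF
  -- continuity of F
  have hFeq : ∀ s : ℝ, F s = FourierTransform.fourier g (s / (2 * π)) := by
    intro s
    rw [Real.fourier_real_eq_integral_exp_smul]
    refine integral_congr_ae (Filter.Eventually.of_forall fun v => ?_)
    show Complex.exp (-(Complex.I * ↑s * ↑v)) * g v
      = Complex.exp (↑(-2 * π * v * (s / (2 * π))) * Complex.I) • g v
    rw [smul_eq_mul]
    congr 1
    have hpi : (2 : ℝ) * π ≠ 0 := by positivity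
    have h1 : (-2) * π * v * (s / (2 * π)) = -(s * v) := by field_simp
    rw [h1]
    push_cast
    ring
  have hFcont : Continuous F := by
    have h1 : Continuous (FourierTransform.fourier g) :=
      VectorFourier.fourierIntegral_continuous Real.continuous_fourierChar
        (innerSL ℝ).continuous₂ hgL1
    have : Continuous fun s : ℝ => FourierTransform.fourier g (s / (2 * π)) :=
      h1.comp (continuous_id.div_const _)
    exact this.congr fun s => (hFeq s).symm
  -- bound function
  set C₀ : ℝ := ∫ t : ℝ, ‖g t‖ with hC₀
  set Cd : ℝ := π ^ 2 * (eVariationOn h Set.univ).toReal / 4 with hCd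
  have hCdnn : 0 ≤ Cd := by positivity
  set B : ℝ → ℝ := fun s =>
    (Set.Icc (-1 : ℝ) 1).indicator (fun _ => C₀) s
      + (Set.Iic (-1 : ℝ) ∪ Set.Ici (1 : ℝ)).indicator (fun x => Cd / x ^ 2) s with hB
  have hIci : IntegrableOn (fun x : ℝ => Cd / x ^ 2) (Set.Ici (1 : ℝ)) volume := by
    rw [integrableOn_Ici_iff_integrableOn_Ioi]
    have h0 : IntegrableOn (fun x : ℝ => x ^ (-2 : ℝ)) (Set.Ioi (1 : ℝ)) volume :=
      integrableOn_Ioi_rpow_of_lt (by norm_num) zero_lt_one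
    refine IntegrableOn.congr_fun (h0.const_mul Cd) (fun x hx => ?_) measurableSet_Ioi
    have hx0 : (0 : ℝ) < x := lt_trans zero_lt_one hx
    rw [Real.rpow_neg hx0.le, show ((2:ℝ)) = ((2:ℕ) : ℝ) by norm_num, Real.rpow_natCast]
    rw [div_eq_mul_inv]
  have hIic : IntegrableOn (fun x : ℝ => Cd / x ^ 2) (Set.Iic (-1 : ℝ)) volume := by
    have h1 : Integrable ((Set.Ici (1 : ℝ)).indicator fun y => Cd / y ^ 2) volume :=
      hIci.integrable_indicator measurableSet_Ici
    have h2 := h1.comp_neg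
    have heq : (fun x : ℝ => (Set.Ici (1 : ℝ)).indicator (fun y => Cd / y ^ 2) (-x))
        = (Set.Iic (-1 : ℝ)).indicator (fun y => Cd / y ^ 2) := by
      ext x
      simp only [Set.indicator_apply, Set.mem_Ici, Set.mem_Iic]
      by_cases hx : x ≤ -1
      · rw [if_pos (by linarith), if_pos hx, neg_sq]
      · rw [if_neg (by intro hc; exact hx (by linarith)), if_neg hx]
    rw [heq] at h2
    exact (integrable_indicator_iff measurableSet_Iic).mp h2
  have hBint : Integrable B volume := by
    refine Integrable.add ?_ ?_
    · refine IntegrableOn.integrable_indicator ?_ measurableSet_Icc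
      exact integrableOn_const measure_Icc_lt_top.ne
    · exact (hIic.union hIci).integrable_indicator
        (measurableSet_Iic.union measurableSet_Ici)
  -- pointwise bound
  have hC₀bound : ∀ s : ℝ, ‖F s‖ ≤ C₀ := by
    intro s
    refine (norm_integral_le_integral_norm _).trans (le_of_eq ?_)
    rw [hC₀]
    refine integral_congr_ae (Filter.Eventually.of_forall fun t => ?_)
    show ‖Complex.exp (-(Complex.I * ↑s * ↑t)) * g t‖ = ‖g t‖
    rw [norm_mul, show ‖Complex.exp (-(Complex.I * ↑s * ↑t))‖ = 1 by
      simp only [Complex.norm_exp]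
      rw [show (-(Complex.I * ↑s * ↑t)).re = 0 by simp]
      simp]
    ring
  have hbound : ∀ s : ℝ, ‖F s‖ ≤ B s := by
    intro s
    by_cases hcase : |s| ≤ 1
    · have h1 : (Set.Icc (-1 : ℝ) 1).indicator (fun _ => C₀) s = C₀ := by
        rw [Set.indicator_of_mem]
        rw [Set.mem_Icc]
        exact abs_le.mp hcase
      have h2 : 0 ≤ (Set.Iic (-1 : ℝ) ∪ Set.Ici (1 : ℝ)).indicator (fun x => Cd / x ^ 2) s :=
        Set.indicator_nonneg (fun x _ => by positivity) s
      rw [hB]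
      simp only
      rw [h1]
      linarith [hC₀bound s]
    · push_neg at hcase
      have hs : s ≠ 0 := by
        intro hc; rw [hc] at hcase; norm_num at hcase
      have hmem : s ∈ Set.Iic (-1 : ℝ) ∪ Set.Ici (1 : ℝ) := by
        rcases le_or_gt 0 s with h0 | h0
        · right
          rw [Set.mem_Ici]
          rw [_root_.abs_of_nonneg h0] at hcase
          linarith
        · left
          rw [Set.mem_Iic]
          rw [_root_.abs_of_neg h0] at hcase
          linarith
      have h2 : (Set.Iic (-1 : ℝ) ∪ Set.Ici (1 : ℝ)).indicator (fun x => Cd / x ^ 2) s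
          = Cd / s ^ 2 := Set.indicator_of_mem hmem _
      have h1 : 0 ≤ (Set.Icc (-1 : ℝ) 1).indicator (fun _ => C₀) s :=
        Set.indicator_nonneg (fun x _ => (norm_nonneg (F x)).trans (hC₀bound x)) s
      have h3 := decay_bound h hBV hL1 g hg hgL1 hs
      rw [hB]
      simp only
      rw [h2]
      rw [← hCd] at h3
      linarith [h3]
  exact hBint.mono' hFcont.aestronglyMeasurable (Filter.Eventually.of_forall hbound)
end
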